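/- Let H and V be finite-dimensional complex inner product spaces, A : H → V a linear map, τ ∈ V a nonzero vector in the image of A, and w₀ := A⁺τ, assumed to have norm 1. Let T := ker A ⊕ span{w₀}, let K ⊆ H be a subspace, and write Π_S for the orthogonal projection onto a subspace S. Define e₋ := min{ ‖Π_K A*ω‖² : ω ∈ V, ⟨τ, ω⟩ = 1 } and w̃₋ := min{ ‖A*ω‖² : ω ∈ V, ⟨τ, ω⟩ = 1, ‖Π_K A*ω‖² = e₋ }. Then w̃₋ = 1 + ‖ (Π_{T⊥} Π_K Π_{T⊥})⁺ Π_{K⊥} w₀ ‖². -/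

import Mathlib

open scoped InnerProductSpace

open LinearMap

/-- The orthogonal projection onto a submodule, as an endomorphism of the ambient space. -/
noncomputable def projL {H : Type*} [NormedAddCommGroup H] [InnerProductSpace ℂ H]
    (K : Submodule ℂ H) [K.HasOrthogonalProjection] : H →ₗ[ℂ] H :=
  K.subtype ∘ₗ (K.orthogonalProjectionOnto).toLinearMap

/-- The four Moore–Penrose equations: `B` is the Moore–Penrose pseudoinverse of `A`. -/
def IsMPInv {H W : Type*} [NormedAddCommGroup H] [InnerProductSpace ℂ H]
    [FiniteDimensional ℂ H] [NormedAddCommGroup W] [InnerProductSpace ℂ W]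
    [FiniteDimensional ℂ W] (A : H →ₗ[ℂ] W) (B : W →ₗ[ℂ] H) : Prop :=
  A ∘ₗ B ∘ₗ A = A ∧ B ∘ₗ A ∘ₗ B = B ∧
    adjoint (A ∘ₗ B) = A ∘ₗ B ∧ adjoint (B ∘ₗ A) = B ∘ₗ A

/-!
Both optimisation problems live on the affine space `{A*ω : ⟨τ, ω⟩ = 1} = w₀ + T⊥`.
Put `S = T⊥`, `M = Π_S Π_K Π_S` and `v₀ = M⁺ Π_{K⊥} w₀ ∈ S`. Since `w₀ ⊥ S`, the vector
`Π_S Π_{K⊥} w₀ = -Π_S Π_K w₀` lies in `range (Π_S Π_K) = range M`, and applying `M` to `v₀` gives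
`Π_S Π_K (w₀ + v₀) = 0`. By Pythagoras,
`‖Π_K (w₀ + v)‖² = ‖Π_K (w₀ + v₀)‖² + ‖Π_K (v - v₀)‖²` for `v ∈ S`, so `e₋ = ‖Π_K (w₀ + v₀)‖²`
and the minimisers are the `v ∈ v₀ + (S ∩ K⊥)`. As `v₀ ∈ range M⁺ ⊆ (ker M)⊥ ⊆ (S ∩ K⊥)⊥`,
the norm `‖w₀ + v‖² = 1 + ‖v‖²` is smallest at `v = v₀`.
-/

section Projection

variable {H : Type*} [NormedAddCommGroup H] [InnerProductSpace ℂ H]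
  (K : Submodule ℂ H) [K.HasOrthogonalProjection]

lemma projL_apply (x : H) : projL K x = K.starProjection x := rfl

lemma adjoint_projL [FiniteDimensional ℂ H] : adjoint (projL K) = projL K :=
  (isSymmetric_iff_isSelfAdjoint _).1 K.starProjection_isSymmetric

lemma projL_projL (x : H) : projL K (projL K x) = projL K x :=
  K.starProjection_eq_self_iff.2 (K.starProjection_apply_mem x)

end Projection

namespace IsMPInv

variable {H W : Type*} [NormedAddCommGroup H] [InnerProductSpace ℂ H] [FiniteDimensional ℂ H]
  [NormedAddCommGroup W] [InnerProductSpace ℂ W] [FiniteDimensional ℂ W]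
  {A : H →ₗ[ℂ] W} {B : W →ₗ[ℂ] H}

lemma apply_apply_of_mem_range (hB : IsMPInv A B) {y : W} (hy : y ∈ range A) :
    A (B y) = y := by
  obtain ⟨x, rfl⟩ := hy
  exact LinearMap.congr_fun hB.1 x

lemma apply_mem_orthogonal_ker (hB : IsMPInv A B) (y : W) : B y ∈ (ker A)ᗮ := by
  rw [orthogonal_ker]
  refine ⟨adjoint B (B y), ?_⟩
  calc adjoint A (adjoint B (B y)) = adjoint (B ∘ₗ A) (B y) := by rw [adjoint_comp]; rfl
    _ = B (A (B y)) := by rw [hB.2.2.2]; rfl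
    _ = B y := LinearMap.congr_fun hB.2.1 y

lemma apply_eq_zero_of_adjoint_apply_eq_zero (hB : IsMPInv A B) {y : W}
    (hy : adjoint A y = 0) : B y = 0 :=
  calc B y = B (A (B y)) := (LinearMap.congr_fun hB.2.1 y).symm
    _ = B (adjoint (A ∘ₗ B) y) := by rw [hB.2.2.1]; rfl
    _ = 0 := by rw [adjoint_comp, comp_apply, hy, map_zero, map_zero]

end IsMPInv

section Sandwich

variable {H : Type*} [NormedAddCommGroup H] [InnerProductSpace ℂ H] [FiniteDimensional ℂ H]
  (S K : Submodule ℂ H)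

lemma adjoint_projL_comp_projL_comp_projL :
    adjoint (projL S ∘ₗ projL K ∘ₗ projL S) = projL S ∘ₗ projL K ∘ₗ projL S := by
  simp only [adjoint_comp, adjoint_projL, comp_assoc]

lemma range_projL_comp_projL_comp_projL :
    range (projL S ∘ₗ projL K ∘ₗ projL S) = range (projL S ∘ₗ projL K) := by
  have : projL S ∘ₗ projL K ∘ₗ projL S =
      (projL S ∘ₗ projL K) ∘ₗ adjoint (projL S ∘ₗ projL K) := by
    ext x
    simp only [adjoint_comp, adjoint_projL, comp_apply, projL_projL]
  rw [this, range_self_comp_adjoint]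

lemma orthogonal_le_ker_projL_comp_projL_comp_projL :
    Sᗮ ≤ ker (projL S ∘ₗ projL K ∘ₗ projL S) := by
  intro x hx
  simp [projL_apply, S.starProjection_apply_eq_zero_iff.2 hx]

lemma inf_orthogonal_le_ker_projL_comp_projL_comp_projL :
    S ⊓ Kᗮ ≤ ker (projL S ∘ₗ projL K ∘ₗ projL S) := by
  rintro x ⟨hxS, hxK⟩
  simp [projL_apply, S.starProjection_eq_self_iff.2 hxS,
    K.starProjection_apply_eq_zero_iff.2 hxK]

end Sandwich

namespace IsMPInv

variable {H : Type*} [NormedAddCommGroup H] [InnerProductSpace ℂ H] [FiniteDimensional ℂ H]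
  {S K : Submodule ℂ H} {B : H →ₗ[ℂ] H} (hB : IsMPInv (projL S ∘ₗ projL K ∘ₗ projL S) B)
include hB

lemma apply_mem_of_projL_comp_projL_comp_projL (y : H) : B y ∈ S := by
  simpa using Submodule.orthogonal_le (orthogonal_le_ker_projL_comp_projL_comp_projL S K)
    (hB.apply_mem_orthogonal_ker y)

lemma apply_mem_orthogonal_inf_of_projL_comp_projL_comp_projL (y : H) : B y ∈ (S ⊓ Kᗮ)ᗮ :=
  Submodule.orthogonal_le (inf_orthogonal_le_ker_projL_comp_projL_comp_projL S K)
    (hB.apply_mem_orthogonal_ker y)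

lemma projL_projL_add_apply_projL_orthogonal_eq_zero {w₀ : H} (hw₀ : w₀ ∈ Sᗮ) :
    projL S (projL K (w₀ + B (projL Kᗮ w₀))) = 0 := by
  have hSy : projL S (projL Kᗮ w₀) = -projL S (projL K w₀) := by
    rw [projL_apply Kᗮ, K.starProjection_orthogonal_val, map_sub, projL_apply S w₀,
      S.starProjection_apply_eq_zero_iff.2 hw₀, zero_sub, projL_apply K]
  have hBy : B (projL Kᗮ w₀) = B (projL S (projL Kᗮ w₀)) := by
    rw [← sub_eq_zero, ← map_sub]
    refine hB.apply_eq_zero_of_adjoint_apply_eq_zero ?_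
    rw [adjoint_projL_comp_projL_comp_projL]
    exact orthogonal_le_ker_projL_comp_projL_comp_projL S K
      (S.sub_starProjection_mem_orthogonal _)
  have hmem : projL S (projL Kᗮ w₀) ∈ range (projL S ∘ₗ projL K ∘ₗ projL S) := by
    rw [range_projL_comp_projL_comp_projL, hSy]
    exact ⟨-w₀, by simp⟩
  have hMBy := hB.apply_apply_of_mem_range hmem
  rw [← hBy, comp_apply, comp_apply, projL_apply S (B _),
    S.starProjection_eq_self_iff.2 (hB.apply_mem_of_projL_comp_projL_comp_projL _), hSy] at hMBy
  rw [map_add, map_add, hMBy, add_neg_cancel]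

end IsMPInv

section Minimization

variable {H : Type*} [NormedAddCommGroup H] [InnerProductSpace ℂ H]
  {S K : Submodule ℂ H} [S.HasOrthogonalProjection] [K.HasOrthogonalProjection]

lemma norm_add_sq_of_inner_eq_zero {x y : H} (h : ⟪x, y⟫_ℂ = 0) :
    ‖x + y‖ ^ 2 = ‖x‖ ^ 2 + ‖y‖ ^ 2 := by
  simp [@norm_add_sq ℂ, h]

lemma norm_projL_add_sq_of_projL_projL_eq_zero {x d : H} (hx : projL S (projL K x) = 0)
    (hd : d ∈ S) : ‖projL K (x + d)‖ ^ 2 = ‖projL K x‖ ^ 2 + ‖projL K d‖ ^ 2 := by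
  rw [map_add]
  refine norm_add_sq_of_inner_eq_zero ?_
  calc ⟪projL K x, projL K d⟫_ℂ = ⟪projL K x, projL S d⟫_ℂ := by
        rw [projL_apply S, S.starProjection_eq_self_iff.2 hd, projL_apply, projL_apply,
          ← K.inner_starProjection_left_eq_right, K.starProjection_eq_self_iff.2
          (K.starProjection_apply_mem x)]
    _ = 0 := by rw [projL_apply S, ← S.inner_starProjection_left_eq_right, ← projL_apply, hx,
          inner_zero_left]

variable {w₀ v₀ : H} (hv₀ : v₀ ∈ S) (hmin : projL S (projL K (w₀ + v₀)) = 0)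
include hv₀ hmin

lemma norm_projL_add_sq_eq (v : H) (hv : v ∈ S) :
    ‖projL K (w₀ + v)‖ ^ 2 = ‖projL K (w₀ + v₀)‖ ^ 2 + ‖projL K (v - v₀)‖ ^ 2 := by
  rw [← norm_projL_add_sq_of_projL_projL_eq_zero hmin (S.sub_mem hv hv₀), add_add_sub_cancel]

lemma isLeast_norm_projL_add_sq :
    IsLeast ((fun v ↦ ‖projL K (w₀ + v)‖ ^ 2) '' S) (‖projL K (w₀ + v₀)‖ ^ 2) := by
  refine ⟨⟨v₀, hv₀, rfl⟩, ?_⟩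
  rintro _ ⟨v, hv, rfl⟩
  simp only [norm_projL_add_sq_eq hv₀ hmin v hv]
  exact le_add_of_nonneg_right (sq_nonneg _)

lemma isLeast_norm_add_sq (hw₀ : w₀ ∈ Sᗮ) (hv₀K : v₀ ∈ (S ⊓ Kᗮ)ᗮ) :
    IsLeast ((fun v ↦ ‖w₀ + v‖ ^ 2) ''
        {v ∈ S | ‖projL K (w₀ + v)‖ ^ 2 = ‖projL K (w₀ + v₀)‖ ^ 2})
      (‖w₀‖ ^ 2 + ‖v₀‖ ^ 2) := by
  have hpyth : ∀ v ∈ S, ‖w₀ + v‖ ^ 2 = ‖w₀‖ ^ 2 + ‖v‖ ^ 2 := fun v hv ↦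
    norm_add_sq_of_inner_eq_zero (Submodule.inner_left_of_mem_orthogonal hv hw₀)
  refine ⟨⟨v₀, ⟨hv₀, rfl⟩, hpyth v₀ hv₀⟩, ?_⟩
  rintro _ ⟨v, ⟨hv, hvmin⟩, rfl⟩
  have hvK : projL K (v - v₀) = 0 := by
    have h0 : ‖projL K (v - v₀)‖ ^ 2 = 0 := by
      linarith [norm_projL_add_sq_eq hv₀ hmin v hv]
    exact norm_eq_zero.1 (pow_eq_zero_iff two_ne_zero |>.1 h0)
  have hdiff : v - v₀ ∈ S ⊓ Kᗮ :=
    ⟨S.sub_mem hv hv₀, K.starProjection_apply_eq_zero_iff.1 hvK⟩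
  have hv_sq : ‖v‖ ^ 2 = ‖v₀‖ ^ 2 + ‖v - v₀‖ ^ 2 := by
    rw [← norm_add_sq_of_inner_eq_zero (Submodule.inner_left_of_mem_orthogonal hdiff hv₀K),
      add_sub_cancel]
  simp only [hpyth v hv, hv_sq]
  nlinarith [sq_nonneg ‖v - v₀‖]

end Minimization

lemma adjoint_image_setOf_inner_eq_one {H W : Type*} [NormedAddCommGroup H]
    [InnerProductSpace ℂ H] [FiniteDimensional ℂ H] [NormedAddCommGroup W]
    [InnerProductSpace ℂ W] [FiniteDimensional ℂ W] {A : H →ₗ[ℂ] W} {τ : W} {w₀ : H}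
    (hAw₀ : A w₀ = τ) (hw₀A : w₀ ∈ (ker A)ᗮ) (hw₀n : ‖w₀‖ = 1) :
    adjoint A '' {ω | ⟪τ, ω⟫_ℂ = 1} = (w₀ + ·) '' (ker A ⊔ ℂ ∙ w₀)ᗮ := by
  have hw₀w₀ : ⟪w₀, w₀⟫_ℂ = 1 := by simp [inner_self_eq_norm_sq_to_K, hw₀n]
  have hτ : ∀ ω, ⟪τ, ω⟫_ℂ = ⟪w₀, adjoint A ω⟫_ℂ := fun ω ↦ by rw [adjoint_inner_right, hAw₀]
  rw [orthogonal_ker] at hw₀A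
  rw [← Submodule.inf_orthogonal, orthogonal_ker]
  ext u
  constructor
  · rintro ⟨ω, hω, rfl⟩
    refine ⟨adjoint A ω - w₀, Submodule.mem_inf.2 ⟨Submodule.sub_mem _ ⟨ω, rfl⟩ hw₀A,
      Submodule.mem_orthogonal_singleton_iff_inner_right.2 ?_⟩, add_sub_cancel _ _⟩
    rw [inner_sub_right, ← hτ, hω, hw₀w₀, sub_self]
  · rintro ⟨v, ⟨hvA, hvw₀⟩, rfl⟩
    obtain ⟨ω, hω⟩ := Submodule.add_mem _ hw₀A hvA
    refine ⟨ω, ?_, hω⟩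
    rw [Set.mem_ofPred_eq, hτ, hω, inner_add_right, hw₀w₀,
      Submodule.mem_orthogonal_singleton_iff_inner_right.1 hvw₀, add_zero]

theorem stmt14_general {H W : Type*}
    [NormedAddCommGroup H] [InnerProductSpace ℂ H] [FiniteDimensional ℂ H]
    [NormedAddCommGroup W] [InnerProductSpace ℂ W] [FiniteDimensional ℂ W]
    (A : H →ₗ[ℂ] W) (τ : W) (hτA : τ ∈ range A)
    (Ainv : W →ₗ[ℂ] H) (hAinv : IsMPInv A Ainv)
    (w₀ : H) (hw₀ : w₀ = Ainv τ) (hw₀n : ‖w₀‖ = 1)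
    (K : Submodule ℂ H)
    (T : Submodule ℂ H) (hT : T = ker A ⊔ Submodule.span ℂ {w₀})
    (B : H →ₗ[ℂ] H) (hB : IsMPInv (projL Tᗮ ∘ₗ projL K ∘ₗ projL Tᗮ) B)
    (eneg : ℝ)
    (heneg : eneg = sInf {r : ℝ | ∃ ω : W, ⟪τ, ω⟫_ℂ = 1 ∧
        r = ‖projL K (adjoint A ω)‖ ^ 2})
    (wneg : ℝ)
    (hwneg : wneg = sInf {r : ℝ | ∃ ω : W, ⟪τ, ω⟫_ℂ = 1 ∧
        ‖projL K (adjoint A ω)‖ ^ 2 = eneg ∧ r = ‖adjoint A ω‖ ^ 2}) :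
    wneg = 1 + ‖B (projL Kᗮ w₀)‖ ^ 2 := by
  have hAw₀ : A w₀ = τ := hw₀ ▸ hAinv.apply_apply_of_mem_range hτA
  have hw₀A : w₀ ∈ (ker A)ᗮ := hw₀ ▸ hAinv.apply_mem_orthogonal_ker τ
  have hw₀T : w₀ ∈ Tᗮᗮ := by
    rw [Submodule.orthogonal_orthogonal, hT]
    exact Submodule.mem_sup_right (Submodule.mem_span_singleton_self w₀)
  have hfeas (p : H → Prop) :
      (∃ ω, ⟪τ, ω⟫_ℂ = 1 ∧ p (adjoint A ω)) ↔ ∃ v ∈ Tᗮ, p (w₀ + v) := by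
    have := Set.exists_mem_image (f := adjoint A) (s := {ω | ⟪τ, ω⟫_ℂ = 1}) (p := p)
    rw [adjoint_image_setOf_inner_eq_one hAw₀ hw₀A hw₀n, ← hT, Set.exists_mem_image] at this
    exact this.symm
  set v₀ := B (projL Kᗮ w₀)
  have hv₀ : v₀ ∈ Tᗮ := hB.apply_mem_of_projL_comp_projL_comp_projL _
  have hmin := hB.projL_projL_add_apply_projL_orthogonal_eq_zero hw₀T
  have he : eneg = ‖projL K (w₀ + v₀)‖ ^ 2 := by
    rw [heneg, ← (isLeast_norm_projL_add_sq hv₀ hmin).csInf_eq]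
    congr 1
    ext r
    exact (hfeas fun u ↦ r = ‖projL K u‖ ^ 2).trans
      (by simp only [Set.mem_image, SetLike.mem_coe, eq_comm])
  have hw : wneg = ‖w₀‖ ^ 2 + ‖v₀‖ ^ 2 := by
    rw [hwneg, ← (isLeast_norm_add_sq hv₀ hmin hw₀T
      (hB.apply_mem_orthogonal_inf_of_projL_comp_projL_comp_projL _)).csInf_eq, he]
    congr 1
    ext r
    exact (hfeas fun u ↦ ‖projL K u‖ ^ 2 = ‖projL K (w₀ + v₀)‖ ^ 2 ∧ r = ‖u‖ ^ 2).trans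
      (by simp only [Set.mem_image, Set.mem_ofPred_eq, and_assoc, eq_comm])
  rw [hw, hw₀n, one_pow]

/-- The optimal min-error negative witness size can be expressed via pseudoinverses:
`w̃₋ = 1 + ‖(Π_{T⊥} Π_K Π_{T⊥})⁺ Π_{K⊥} w₀‖²`. -/
theorem stmt14 {H W : Type*}
    [NormedAddCommGroup H] [InnerProductSpace ℂ H] [FiniteDimensional ℂ H]
    [NormedAddCommGroup W] [InnerProductSpace ℂ W] [FiniteDimensional ℂ W]
    (A : H →ₗ[ℂ] W) (τ : W) (hτ : τ ≠ 0) (hτA : τ ∈ range A)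
    (Ainv : W →ₗ[ℂ] H) (hAinv : IsMPInv A Ainv)
    (w₀ : H) (hw₀ : w₀ = Ainv τ) (hw₀n : ‖w₀‖ = 1)
    (K : Submodule ℂ H)
    (T : Submodule ℂ H) (hT : T = ker A ⊔ Submodule.span ℂ {w₀})
    (B : H →ₗ[ℂ] H) (hB : IsMPInv (projL Tᗮ ∘ₗ projL K ∘ₗ projL Tᗮ) B)
    (eneg : ℝ)
    (heneg : eneg = sInf {r : ℝ | ∃ ω : W, ⟪τ, ω⟫_ℂ = 1 ∧
        r = ‖projL K (adjoint A ω)‖ ^ 2})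
    (wneg : ℝ)
    (hwneg : wneg = sInf {r : ℝ | ∃ ω : W, ⟪τ, ω⟫_ℂ = 1 ∧
        ‖projL K (adjoint A ω)‖ ^ 2 = eneg ∧ r = ‖adjoint A ω‖ ^ 2}) :
    wneg = 1 + ‖B (projL Kᗮ w₀)‖ ^ 2 :=
  stmt14_general A τ hτA Ainv hAinv w₀ hw₀ hw₀n K T hT B hB eneg heneg wneg hwneg
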